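/- For every integer r and all natural numbers ℓ, s: Σ_{b=0}^{s−r−1} (b+r−s)_ℓ · (b)_s − Σ_{b=s−r}^{−1} (b+r−s)_ℓ · (b)_s = (−1)^{s+1} · ℓ! · s! · binom(r, ℓ+s+1), an identity of integers (at most one of the two sums is nonempty). -/

import Mathlib

/-!
Write `S n g = Σ_{b=0}^{n-1} g b − Σ_{b=n}^{-1} g b`, the discrete antiderivative of `g`
vanishing at `0`; the left-hand side is `T(ℓ, s) = S (s - r) (b ↦ (b+r-s)_ℓ (b)_s)`.
Summation by parts with `Δ (a)_{k+1} = (k+1) (a)_k` gives `(s+1) T(ℓ+1, s) = -(ℓ+1) T(ℓ, s+1)`,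
both boundary terms vanishing because `(0)_{k+1} = 0`. For `ℓ = 0` the hockey-stick identity
`(s+1) S n (b ↦ (b)_s) = (n)_{s+1}` and the reflection `(s-r)_{s+1} = (-1)^{s+1} (r)_{s+1}` give
the claim, with `(r)_k = k! binom(r, k)` (`Ring.choose`) taking care of the division in `intBinom`.
-/

/-- The falling factorial `(a)_k = a(a−1)⋯(a−k+1)` for `a : ℤ`, with `(a)_0 = 1`. -/
def fallFact (a : ℤ) (k : ℕ) : ℤ := ∏ i ∈ Finset.range k, (a - i)

/-- The generalized binomial coefficient `binom(a,k) = (a)_k / k! ∈ ℤ`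
for `a : ℤ` and `k : ℕ` (the division is exact). -/
def intBinom (a : ℤ) (k : ℕ) : ℤ := fallFact a k / (k.factorial : ℤ)

open Finset

theorem fallFact_eq_eval_descPochhammer (a : ℤ) (k : ℕ) :
    fallFact a k = (descPochhammer ℤ k).eval a :=
  (descPochhammer_eval_eq_prod_range k a).symm

theorem fallFact_zero_right (a : ℤ) : fallFact a 0 = 1 := prod_range_zero _

theorem fallFact_succ (a : ℤ) (k : ℕ) : fallFact a (k + 1) = fallFact a k * (a - k) :=
  prod_range_succ _ k

theorem fallFact_succ_eq_mul_fallFact_sub_one (a : ℤ) (k : ℕ) :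
    fallFact a (k + 1) = a * fallFact (a - 1) k := by
  simp only [fallFact, prod_range_succ', Nat.cast_add, Nat.cast_one, Nat.cast_zero, sub_zero,
    sub_add_eq_sub_sub_swap, mul_comm]

theorem fallFact_zero_succ (k : ℕ) : fallFact 0 (k + 1) = 0 := by
  rw [fallFact_succ_eq_mul_fallFact_sub_one, zero_mul]

theorem fallFact_add_one_succ (a : ℤ) (k : ℕ) :
    fallFact (a + 1) (k + 1) = fallFact a (k + 1) + (k + 1) * fallFact a k := by
  rw [fallFact_succ_eq_mul_fallFact_sub_one, add_sub_cancel_right, fallFact_succ]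
  ring

theorem fallFact_sub_one_sub (a : ℤ) (k : ℕ) :
    fallFact (k - 1 - a) k = (-1) ^ k * fallFact a k := by
  rw [fallFact_eq_eval_descPochhammer, fallFact_eq_eval_descPochhammer,
    descPochhammer_eval_eq_ascPochhammer, ← ascPochhammer_eval_neg_eq_descPochhammer]
  ring_nf

theorem fallFact_eq_factorial_mul_choose (a : ℤ) (k : ℕ) :
    fallFact a k = k.factorial * Ring.choose a k := by
  rw [fallFact_eq_eval_descPochhammer, Polynomial.eval_eq_smeval,
    Ring.descPochhammer_eq_factorial_smul_choose, nsmul_eq_mul]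

theorem intBinom_eq_choose (a : ℤ) (k : ℕ) : intBinom a k = Ring.choose a k := by
  rw [intBinom, fallFact_eq_factorial_mul_choose,
    Int.mul_ediv_cancel_left _ (Nat.cast_ne_zero.2 k.factorial_ne_zero)]

section SignedSum

variable {M : Type*} [AddCommGroup M]

noncomputable def signedSum (g : ℤ → M) (n : ℤ) : M :=
  ∑ b ∈ Icc 0 (n - 1), g b - ∑ b ∈ Icc n (-1), g b

theorem signedSum_zero (g : ℤ → M) : signedSum g 0 = 0 := by
  simp [signedSum]

theorem signedSum_add_one (g : ℤ → M) (n : ℤ) : signedSum g (n + 1) = signedSum g n + g n := by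
  rcases le_or_gt 0 n with hn | hn
  · have hIcc : Icc 0 (n + 1 - 1) = insert n (Icc 0 (n - 1)) := by
      ext x; simp only [mem_Icc, mem_insert]; omega
    rw [signedSum, signedSum, hIcc, sum_insert (by simp), Icc_eq_empty (a := n) (by omega),
      Icc_eq_empty (a := n + 1) (by omega)]
    abel
  · have hIcc : Icc n (-1) = insert n (Icc (n + 1) (-1)) := by
      ext x; simp only [mem_Icc, mem_insert]; omega
    rw [signedSum, signedSum, hIcc, sum_insert (by simp), Icc_eq_empty (b := n + 1 - 1) (by omega),
      Icc_eq_empty (b := n - 1) (by omega)]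
    abel

theorem signedSum_eq_sub_of_add_one {g P : ℤ → M} (hP : ∀ n, P (n + 1) = P n + g n) (n : ℤ) :
    signedSum g n = P n - P 0 := by
  induction n using Int.induction_on with
  | zero => rw [signedSum_zero, sub_self]
  | succ k ih => rw [signedSum_add_one, hP, ih]; abel
  | pred k ih =>
    have hS := signedSum_add_one g (-k - 1)
    have hP' := hP (-k - 1)
    rw [sub_add_cancel, ih] at hS
    rw [sub_add_cancel] at hP'
    rw [eq_sub_of_add_eq hS.symm, hP']
    abel

theorem signedSum_add (g₁ g₂ : ℤ → M) (n : ℤ) :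
    signedSum (fun b => g₁ b + g₂ b) n = signedSum g₁ n + signedSum g₂ n := by
  simp only [signedSum, sum_add_distrib]
  abel

theorem signedSum_comp_add_one (g : ℤ → M) (n : ℤ) :
    signedSum (fun b => g (b + 1)) n = signedSum g (n + 1) - g 0 := by
  have h1 : signedSum g 1 = g 0 := by simpa [signedSum_zero] using signedSum_add_one g 0
  rw [signedSum_eq_sub_of_add_one (P := fun n => signedSum g (n + 1))
    (fun n => signedSum_add_one g (n + 1)), zero_add, h1]

theorem signedSum_mul_left {R : Type*} [Ring R] (c : R) (g : ℤ → R) (n : ℤ) :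
    signedSum (fun b => c * g b) n = c * signedSum g n := by
  simp only [signedSum, mul_sum, mul_sub]

theorem signedSum_by_parts {R : Type*} [CommRing R] (f g : ℤ → R) (n : ℤ) :
    signedSum (fun b => f b * (g (b + 1) - g b)) n
      + signedSum (fun b => (f (b + 1) - f b) * g (b + 1)) n = f n * g n - f 0 * g 0 := by
  rw [← signedSum_add]
  exact signedSum_eq_sub_of_add_one (P := fun b => f b * g b) (fun b => by ring) n

end SignedSum

theorem signedSum_fallFact (k : ℕ) (n : ℤ) :
    (k + 1) * signedSum (fun b => fallFact b k) n = fallFact n (k + 1) := by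
  rw [← signedSum_mul_left, signedSum_eq_sub_of_add_one (P := fun n => fallFact n (k + 1))
    (fun n => fallFact_add_one_succ n k), fallFact_zero_succ, sub_zero]

theorem succ_mul_signedSum_fallFact_succ_mul_fallFact (r : ℤ) (ℓ s : ℕ) :
    (s + 1) * signedSum (fun b => fallFact (b + r - s) (ℓ + 1) * fallFact b s) (s - r)
      = -((ℓ + 1) * signedSum (fun b => fallFact (b + r - (s + 1 : ℕ)) ℓ * fallFact b (s + 1))
          ((s + 1 : ℕ) - r)) := by
  set summand : ℤ → ℤ := fun b => fallFact (b + r - (s + 1 : ℕ)) ℓ * fallFact b (s + 1)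
  have hparts := signedSum_by_parts (fun b => fallFact (b + r - s) (ℓ + 1))
    (fun b => fallFact b (s + 1)) (s - r)
  have hleft : (fun b => fallFact (b + r - s) (ℓ + 1)
      * (fallFact (b + 1) (s + 1) - fallFact b (s + 1)))
      = fun b => (s + 1) * (fallFact (b + r - s) (ℓ + 1) * fallFact b s) := by
    ext b; rw [fallFact_add_one_succ]; ring
  have hright : (fun b => (fallFact (b + 1 + r - s) (ℓ + 1) - fallFact (b + r - s) (ℓ + 1))
      * fallFact (b + 1) (s + 1)) = fun b => (ℓ + 1) * summand (b + 1) := by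
    ext b
    rw [show b + 1 + r - s = b + r - s + 1 by ring, fallFact_add_one_succ]
    simp only [summand]
    push_cast
    ring_nf
  have h0 : summand 0 = 0 := by simp only [summand, fallFact_zero_succ, mul_zero]
  simp only [hleft, hright, signedSum_mul_left, signedSum_comp_add_one, h0, sub_zero,
    sub_add_cancel, sub_self, fallFact_zero_succ, zero_mul, mul_zero] at hparts
  rw [show ((s + 1 : ℕ) : ℤ) - r = s - r + 1 by push_cast; ring]
  linear_combination hparts

theorem signedSum_fallFact_mul_fallFact (r : ℤ) (ℓ s : ℕ) :
    signedSum (fun b => fallFact (b + r - s) ℓ * fallFact b s) (s - r)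
      = (-1) ^ (s + 1) * ℓ.factorial * s.factorial * Ring.choose r (ℓ + s + 1) := by
  induction ℓ generalizing s with
  | zero =>
    have hrefl := fallFact_sub_one_sub r (s + 1)
    rw [fallFact_eq_factorial_mul_choose r,
      show ((s + 1 : ℕ) : ℤ) - 1 - r = s - r by push_cast; ring] at hrefl
    simp only [fallFact_zero_right, one_mul]
    refine mul_left_cancel₀ (show (s + 1 : ℤ) ≠ 0 by positivity) ?_
    rw [signedSum_fallFact, hrefl, Nat.factorial_succ, zero_add]
    push_cast
    ring
  | succ ℓ ih =>
    refine mul_left_cancel₀ (show (s + 1 : ℤ) ≠ 0 by positivity) ?_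
    rw [succ_mul_signedSum_fallFact_succ_mul_fallFact, ih (s + 1),
      show ℓ + (s + 1) + 1 = ℓ + 1 + s + 1 by omega, Nat.factorial_succ, Nat.factorial_succ]
    push_cast
    ring

/-- for every integer `r` and all naturals `ℓ, s`:
`Σ_{b=0}^{s−r−1} (b+r−s)_ℓ (b)_s − Σ_{b=s−r}^{−1} (b+r−s)_ℓ (b)_s
  = (−1)^{s+1} ℓ! s! binom(r, ℓ+s+1)`. -/
theorem stmt13 (r : ℤ) (ℓ s : ℕ) :
    (∑ b ∈ Finset.Icc (0 : ℤ) ((s : ℤ) - r - 1), fallFact (b + r - s) ℓ * fallFact b s)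
      - (∑ b ∈ Finset.Icc ((s : ℤ) - r) (-1 : ℤ), fallFact (b + r - s) ℓ * fallFact b s)
      = (-1) ^ (s + 1) * (ℓ.factorial : ℤ) * (s.factorial : ℤ) * intBinom r (ℓ + s + 1) := by
  rw [intBinom_eq_choose]
  exact signedSum_fallFact_mul_fallFact r ℓ s
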